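/- arXiv:2101.12415 — 5 statements merged into one kernel-verified Lean document; each statement's English description precedes it below -/
import Mathlib

section
/- Let ς > 0 and Θ ∈ (0, 2√2/3) (i.e., 9Θ² < 8). For every d ≥ 0 the quartic f_d(r) = r⁴ − 2dΘr³ + d²r² − ς has a unique positive real root, denoted r_cov(d). Then the function d ↦ r_cov(d) attains its maximum over d ∈ [0, ∞) at d* = Θ·(ς/(1−Θ²))^{1/4}, and the maximum value is r_cov(d*) = (ς/(1−Θ²))^{1/4}. -/
private lemma quartic_strict_lt (d Θ : ℝ) (hd : 0 ≤ d) (hΘ8 : 9*Θ^2 < 8)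
    {a b : ℝ} (ha : 0 < a) (hab : a < b) :
    a^4 - 2*d*Θ*a^3 + d^2*a^2 < b^4 - 2*d*Θ*b^3 + d^2*b^2 := by
  have hΘ1 : Θ^2 < 1 := by nlinarith
  have hb := ha.trans hab
  have hba : (0:ℝ) ≤ b - a := by linarith
  have pm : 0 < 2*((a+b)/2)^2 - 3*d*Θ*((a+b)/2) + d^2 := by
    rcases eq_or_lt_of_le hd with h | h
    · subst h; nlinarith [mul_pos (add_pos ha hb) (add_pos ha hb)]
    · nlinarith [sq_nonneg (4*((a+b)/2) - 3*d*Θ), mul_pos h h]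
  rcases le_or_gt (d*Θ) (a+b) with h | h
  · nlinarith [mul_pos (sub_pos.2 hab) pm,
      mul_nonneg (mul_nonneg hba (sq_nonneg (a-b))) (sub_nonneg.2 h), mul_pos ha hb]
  · nlinarith [mul_nonneg hba (mul_nonneg (by linarith : (0:ℝ) ≤ a+b) (sq_nonneg (a+b-d*Θ))),
      mul_nonneg hba (mul_nonneg (mul_nonneg (by linarith : (0:ℝ) ≤ a+b) (sq_nonneg d))
        (by linarith : (0:ℝ) ≤ 1-Θ^2)),
      mul_pos (sub_pos.2 hab) (mul_pos (mul_pos ha hb) (sub_pos.2 h))]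

/-- First branch of Theorem 1: for `9Θ² < 8` the quartic `r⁴ - 2dΘr³ + d²r² - ς` has a
unique positive root `r_cov(d)` for each `d ≥ 0`, and `d ↦ r_cov(d)` attains its maximum
over `[0, ∞)` at `d* = Θ (ς/(1-Θ²))^{1/4}` with maximum value `(ς/(1-Θ²))^{1/4}`. -/
theorem stmt2 (ς Θ : ℝ) (hς : 0 < ς) (hΘ : Θ ∈ Set.Ioo 0 (2 * Real.sqrt 2 / 3)) :
    (∀ d : ℝ, 0 ≤ d →
      ∃! rr : ℝ, 0 < rr ∧ rr ^ 4 - 2 * d * Θ * rr ^ 3 + d ^ 2 * rr ^ 2 - ς = 0) ∧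
    (∀ rcov : ℝ → ℝ,
      (∀ d : ℝ, 0 ≤ d → 0 < rcov d ∧
        (rcov d) ^ 4 - 2 * d * Θ * (rcov d) ^ 3 + d ^ 2 * (rcov d) ^ 2 - ς = 0) →
      (∀ d : ℝ, 0 ≤ d → rcov d ≤ (ς / (1 - Θ ^ 2)) ^ ((1 : ℝ) / 4)) ∧
      rcov (Θ * (ς / (1 - Θ ^ 2)) ^ ((1 : ℝ) / 4)) = (ς / (1 - Θ ^ 2)) ^ ((1 : ℝ) / 4)) := by
  obtain ⟨hΘ0, hΘu⟩ := hΘ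
  have hs2 : Real.sqrt 2 ^ 2 = 2 := Real.sq_sqrt (by norm_num)
  have hΘ8 : 9 * Θ ^ 2 < 8 := by nlinarith [Real.sqrt_nonneg 2]
  have hΘ1 : Θ ^ 2 < 1 := by nlinarith
  have h1Θ : 0 < 1 - Θ ^ 2 := by linarith
  -- Part 1: unique positive root for each d ≥ 0
  have part1 : ∀ d : ℝ, 0 ≤ d →
      ∃! rr : ℝ, 0 < rr ∧ rr ^ 4 - 2 * d * Θ * rr ^ 3 + d ^ 2 * rr ^ 2 - ς = 0 := by
    intro d hd
    set s : ℝ := ς ^ ((1:ℝ)/4) with hs_def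
    have hs : 0 < s := Real.rpow_pos_of_pos hς _
    have hs4 : s ^ 4 = ς := by
      rw [hs_def, ← Real.rpow_natCast (ς ^ ((1:ℝ)/4)) 4, ← Real.rpow_mul hς.le]
      norm_num
    set R0 : ℝ := d * Θ + s with hR0_def
    have hR0 : 0 < R0 := by positivity
    have hcont : Continuous fun r : ℝ => r ^ 4 - 2 * d * Θ * r ^ 3 + d ^ 2 * r ^ 2 - ς := by
      continuity
    have hgR0 : 0 ≤ (fun r : ℝ => r ^ 4 - 2 * d * Θ * r ^ 3 + d ^ 2 * r ^ 2 - ς) R0 := by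
      simp only [hR0_def]
      nlinarith [mul_nonneg (mul_nonneg (mul_nonneg hd hΘ0.le)
          (by positivity : (0:ℝ) ≤ d*Θ + 2*s)) (sq_nonneg s),
        mul_nonneg (sq_nonneg (d*Θ + s)) (mul_nonneg (sq_nonneg d) (le_of_lt h1Θ))]
    obtain ⟨r, hrmem, hgr⟩ := intermediate_value_Icc hR0.le hcont.continuousOn
      (Set.mem_Icc.2 ⟨by norm_num; linarith, hgR0⟩)
    have hgr2 : r ^ 4 - 2 * d * Θ * r ^ 3 + d ^ 2 * r ^ 2 - ς = 0 := hgr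
    have hr0 : 0 < r := by
      rcases eq_or_lt_of_le hrmem.1 with h | h
      · exfalso; rw [← h] at hgr2; norm_num at hgr2; linarith
      · exact h
    refine ⟨r, ⟨hr0, hgr2⟩, ?_⟩
    rintro r' ⟨hr'0, hgr'⟩
    rcases lt_trichotomy r' r with h | h | h
    · exfalso
      have := quartic_strict_lt d Θ hd hΘ8 hr'0 h
      have : r' ^ 4 - 2*d*Θ*r' ^ 3 + d^2*r' ^ 2 - ς < r ^ 4 - 2*d*Θ*r ^ 3 + d^2*r ^ 2 - ς := by
        linarith
      rw [hgr2, hgr'] at this; exact lt_irrefl 0 this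
    · exact h
    · exfalso
      have := quartic_strict_lt d Θ hd hΘ8 hr0 h
      have : r ^ 4 - 2*d*Θ*r ^ 3 + d^2*r ^ 2 - ς < r' ^ 4 - 2*d*Θ*r' ^ 3 + d^2*r' ^ 2 - ς := by
        linarith
      rw [hgr2, hgr'] at this; exact lt_irrefl 0 this
  refine ⟨part1, ?_⟩
  intro rcov hrc
  set R : ℝ := (ς / (1 - Θ ^ 2)) ^ ((1:ℝ)/4) with hR_def
  have hR : 0 < R := Real.rpow_pos_of_pos (div_pos hς h1Θ) _
  have hR4 : R ^ 4 = ς / (1 - Θ ^ 2) := by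
    rw [hR_def, ← Real.rpow_natCast ((ς / (1 - Θ ^ 2)) ^ ((1:ℝ)/4)) 4,
      ← Real.rpow_mul (div_pos hς h1Θ).le]
    norm_num
  have hR4' : R ^ 4 * (1 - Θ ^ 2) = ς := by
    rw [hR4]; field_simp
  -- at any d ≥ 0 the quartic is nonnegative at R
  have key : ∀ d : ℝ, R ^ 4 - 2 * d * Θ * R ^ 3 + d ^ 2 * R ^ 2 - ς =
      R ^ 2 * (d - Θ * R) ^ 2 := by
    intro d; linear_combination hR4'
  constructor
  · intro d hd
    obtain ⟨hpos, hroot⟩ := hrc d hd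
    by_contra hlt
    push_neg at hlt
    have := quartic_strict_lt d Θ hd hΘ8 hR hlt
    have h1 : (0:ℝ) ≤ R ^ 4 - 2 * d * Θ * R ^ 3 + d ^ 2 * R ^ 2 - ς := by
      rw [key d]; positivity
    linarith
  · have hd : 0 ≤ Θ * R := by positivity
    obtain ⟨hpos, hroot⟩ := hrc (Θ * R) hd
    have hRroot : 0 < R ∧ R ^ 4 - 2 * (Θ * R) * Θ * R ^ 3 + (Θ * R) ^ 2 * R ^ 2 - ς = 0 :=
      ⟨hR, by linear_combination hR4'⟩
    exact (part1 (Θ * R) hd).unique ⟨hpos, hroot⟩ hRroot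
end

section
/- Let ς > 0 and Θ ∈ (0, 1). For any r > 0 and any d ≥ 0, if r⁴ − 2dΘr³ + d²r² ≤ ς, then r ≤ (ς/(1−Θ²))^{1/4}. Moreover, setting r* = (ς/(1−Θ²))^{1/4} and d* = Θ·r*, one has r*⁴ − 2d*Θr*³ + d*²r*² = ς, so the bound is attained. -/
/-- The largest feasible sector-edge distance over all PB placements is
`r_max = (ς/(1-Θ²))^{1/4}`, attained when `d = Θ r_max`. -/
theorem stmt3 (ς Θ : ℝ) (hς : 0 < ς) (hΘ : Θ ∈ Set.Ioo (0 : ℝ) 1) :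
    (∀ r : ℝ, 0 < r → ∀ d : ℝ, 0 ≤ d →
      r ^ 4 - 2 * d * Θ * r ^ 3 + d ^ 2 * r ^ 2 ≤ ς →
      r ≤ (ς / (1 - Θ ^ 2)) ^ ((1 : ℝ) / 4)) ∧
    (let rstar : ℝ := (ς / (1 - Θ ^ 2)) ^ ((1 : ℝ) / 4)
     let dstar : ℝ := Θ * rstar
     rstar ^ 4 - 2 * dstar * Θ * rstar ^ 3 + dstar ^ 2 * rstar ^ 2 = ς) := by
  obtain ⟨hΘ0, hΘ1⟩ := hΘ
  have h1 : (0:ℝ) < 1 - Θ ^ 2 := by nlinarith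
  have hx : (0:ℝ) < ς / (1 - Θ ^ 2) := div_pos hς h1
  have hpow : ((ς / (1 - Θ ^ 2)) ^ ((1 : ℝ) / 4)) ^ 4 = ς / (1 - Θ ^ 2) := by
    rw [← Real.rpow_natCast ((ς / (1 - Θ ^ 2)) ^ ((1 : ℝ) / 4)) 4,
      ← Real.rpow_mul hx.le]
    norm_num
  constructor
  · intro r hr d hd hle
    have h4 : r ^ 4 ≤ ς / (1 - Θ ^ 2) := by
      rw [le_div_iff₀ h1]
      nlinarith [sq_nonneg (d - Θ * r), sq_nonneg r, mul_pos hr hr]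
    have := Real.rpow_le_rpow (by positivity) h4 (by norm_num : (0:ℝ) ≤ 1/4)
    calc r = (r ^ 4) ^ ((1:ℝ)/4) := by
            rw [← Real.rpow_natCast r 4, ← Real.rpow_mul hr.le]
            norm_num
      _ ≤ (ς / (1 - Θ ^ 2)) ^ ((1:ℝ)/4) := this
  · intro rstar dstar
    have : rstar ^ 4 - 2 * dstar * Θ * rstar ^ 3 + dstar ^ 2 * rstar ^ 2
        = rstar ^ 4 * (1 - Θ ^ 2) := by simp only [dstar]; ring
    rw [this, hpow]
    field_simp
end

section
/- Let ς > 0, d ≥ 0, and Θ ∈ (0, 2√2/3) (i.e., 9Θ² < 8). Then the quartic f(r) = r⁴ − 2dΘr³ + d²r² − ς has exactly one positive real root. -/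
/-- When `9Θ² < 8`, the sector-edge path-loss quartic `r⁴ - 2dΘr³ + d²r² - ς` has
exactly one positive real root. -/
theorem stmt7 (ς d Θ : ℝ) (hς : 0 < ς) (hd : 0 ≤ d)
    (hΘ : Θ ∈ Set.Ioo 0 (2 * Real.sqrt 2 / 3)) :
    ∃! r : ℝ, 0 < r ∧ r ^ 4 - 2 * d * Θ * r ^ 3 + d ^ 2 * r ^ 2 - ς = 0 := by
  obtain ⟨hΘ0, hΘ2⟩ := hΘ
  have hsq : Real.sqrt 2 ^ 2 = 2 := Real.sq_sqrt (by norm_num)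
  have hΘ8 : 9 * Θ ^ 2 < 8 := by nlinarith [Real.sqrt_nonneg 2]
  have hΘ1 : Θ < 1 := by nlinarith
  set g : ℝ → ℝ := fun r => r ^ 4 - 2 * d * Θ * r ^ 3 + d ^ 2 * r ^ 2 with hg
  have hcont : Continuous g := by fun_prop
  have hderiv : ∀ r : ℝ, HasDerivAt g (4 * r ^ 3 - 2 * d * Θ * (3 * r ^ 2) + d ^ 2 * (2 * r)) r := by
    intro r
    have h1 := hasDerivAt_pow 4 r
    have h2 := (hasDerivAt_pow 3 r).const_mul (2 * d * Θ)
    have h3 := (hasDerivAt_pow 2 r).const_mul (d ^ 2)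
    have h := (h1.sub h2).add h3
    rw [hg]
    convert h using 1
    · rfl
    · rfl
    · rfl
    · norm_num
  have hmono : StrictMonoOn g (Set.Ici 0) := by
    apply strictMonoOn_of_deriv_pos (convex_Ici 0) hcont.continuousOn
    intro r hr
    rw [interior_Ici] at hr
    rw [(hderiv r).deriv]
    have hr' : (0:ℝ) < r := hr
    have hin : 0 < 2 * r ^ 2 - 3 * d * Θ * r + d ^ 2 := by
      rcases hd.eq_or_lt with h | h
      · rw [← h]; nlinarith [mul_pos hr' hr']
      · nlinarith [sq_nonneg (4 * r - 3 * d * Θ), mul_pos (mul_pos h h)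
          (show (0:ℝ) < 8 - 9 * Θ ^ 2 by linarith)]
    nlinarith [mul_pos hr' hin]
  set R : ℝ := d + ς + 1 with hR
  have hR0 : (0 : ℝ) ≤ R := by positivity
  have hgR : ς ≤ g R := by
    have h1 : (1:ℝ) ≤ ς + 1 := by linarith
    have h2 : R - d = ς + 1 := by ring
    have key : R ^ 2 * (R - d) ^ 2 ≤ g R := by
      simp only [hg]
      nlinarith [mul_nonneg (mul_nonneg hd hΘ0.le) (mul_nonneg (mul_nonneg hR0 hR0) hR0),
        mul_nonneg hd (mul_nonneg (mul_nonneg hR0 hR0) hR0)]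
    have : ς ≤ R ^ 2 * (R - d) ^ 2 := by
      rw [h2]
      have hR1 : (1:ℝ) ≤ R := by rw [hR]; linarith
      nlinarith [mul_le_mul hR1 hR1 zero_le_one (by linarith : (0:ℝ) ≤ R), sq_nonneg ς]
    linarith
  have hg0 : g 0 = 0 := by simp [hg]
  obtain ⟨r, hrmem, hgr⟩ : ∃ r ∈ Set.Icc (0:ℝ) R, g r = ς := by
    have := intermediate_value_Icc hR0 hcont.continuousOn
    exact this ⟨by rw [hg0]; exact hς.le, hgR⟩
  have hrpos : 0 < r := by
    rcases lt_or_eq_of_le hrmem.1 with h | h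
    · exact h
    · exfalso; rw [← h] at hgr; rw [hg0] at hgr; linarith
  refine ⟨r, ⟨hrpos, by simp only [hg] at hgr; linarith⟩, ?_⟩
  rintro s ⟨hspos, hs⟩
  have hgs : g s = ς := by simp only [hg]; linarith
  exact hmono.injOn (Set.mem_Ici.mpr hspos.le) (Set.mem_Ici.mpr hrpos.le) (by rw [hgs, hgr])
end

section
/- Let ς > 0 and Θ ∈ (2√2/3, 1) (i.e., 8 < 9Θ² < 9). Define X = −(1/(2(1−Θ²)))·( ς·Θ·(9Θ² − 8)^{3/2} + ς·(27Θ⁴ − 36Θ² + 8) ). Then X > 0 and X satisfies the quadratic equation 16ς(Θ² − 1)·X² + ς²(576Θ² − 128 − 432Θ⁴)·X − 256ς³ = 0. In other words, d′ = X^{1/4} is the PB distance at which the sector-edge quartic first admits a real double root. -/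
/-- Lemma 3 (root form): for `8 < 9Θ² < 9`, the quantity
`X = -(1/(2(1-Θ²)))(ςΘ(9Θ²-8)^{3/2} + ς(27Θ⁴-36Θ²+8))` is positive and is a root of the
discriminant quadratic `16ς(Θ²-1)X² + ς²(576Θ² - 128 - 432Θ⁴)X - 256ς³ = 0`;
`d' = X^{1/4}` is the PB distance at which the sector-edge quartic first admits a real
double root. -/
theorem stmt10 (ς Θ : ℝ) (hς : 0 < ς) (hΘ : Θ ∈ Set.Ioo (2 * Real.sqrt 2 / 3) 1) :
    let X : ℝ := -(1 / (2 * (1 - Θ ^ 2))) *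
      (ς * Θ * (9 * Θ ^ 2 - 8) ^ ((3 : ℝ) / 2) + ς * (27 * Θ ^ 4 - 36 * Θ ^ 2 + 8))
    0 < X ∧
      16 * ς * (Θ ^ 2 - 1) * X ^ 2 +
        ς ^ 2 * (576 * Θ ^ 2 - 128 - 432 * Θ ^ 4) * X - 256 * ς ^ 3 = 0 := by
  obtain ⟨h1, h2⟩ := hΘ
  have hs2' : Real.sqrt 2 ^ 2 = 2 := Real.sq_sqrt (by norm_num)
  have hs2nn : 0 ≤ Real.sqrt 2 := Real.sqrt_nonneg 2
  have hΘpos : 0 < Θ := lt_trans (by positivity) h1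
  have hΘsq : 8 / 9 < Θ ^ 2 := by nlinarith
  have hΘsq1 : Θ ^ 2 < 1 := by nlinarith
  have ha : (0:ℝ) ≤ 9 * Θ ^ 2 - 8 := by nlinarith
  set s := Real.sqrt (9 * Θ ^ 2 - 8) with hs
  have hsnn : 0 ≤ s := Real.sqrt_nonneg _
  have hs2 : s ^ 2 = 9 * Θ ^ 2 - 8 := Real.sq_sqrt ha
  have hrpow : (9 * Θ ^ 2 - 8) ^ ((3 : ℝ) / 2) = s ^ 3 := by
    rw [show (3:ℝ)/2 = (1/2) * (3:ℕ) by norm_num, Real.rpow_mul ha, Real.rpow_natCast,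
      ← Real.sqrt_eq_rpow]
  have hs6 : s ^ 6 = (9 * Θ ^ 2 - 8) ^ 3 := by
    calc s ^ 6 = (s ^ 2) ^ 3 := by ring
    _ = _ := by rw [hs2]
  have key : Θ ^ 2 * s ^ 6 - (27 * Θ ^ 4 - 36 * Θ ^ 2 + 8) ^ 2 = 64 * (Θ ^ 2 - 1) := by
    rw [hs6]; ring
  have hP : 27 * Θ ^ 4 - 36 * Θ ^ 2 + 8 < 0 := by nlinarith
  have hneg : Θ * s ^ 3 + (27 * Θ ^ 4 - 36 * Θ ^ 2 + 8) < 0 := by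
    nlinarith [mul_nonneg (mul_nonneg hΘpos.le hsnn) (mul_nonneg hsnn hsnn)]
  have hD : (0:ℝ) < 2 * (1 - Θ ^ 2) := by nlinarith
  intro X
  constructor
  · have : X = -(1 / (2 * (1 - Θ ^ 2))) * (ς * (Θ * s ^ 3 + (27 * Θ ^ 4 - 36 * Θ ^ 2 + 8))) := by
      simp only [X, hrpow]; ring
    rw [this]
    have hfac : ς * (Θ * s ^ 3 + (27 * Θ ^ 4 - 36 * Θ ^ 2 + 8)) < 0 :=
      mul_neg_of_pos_of_neg hς hneg
    have hden : -(1 / (2 * (1 - Θ ^ 2))) < 0 := by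
      simp only [neg_neg, neg_lt_zero]
      positivity
    exact mul_pos_of_neg_of_neg hden hfac
  · show 16 * ς * (Θ ^ 2 - 1) * X ^ 2 +
        ς ^ 2 * (576 * Θ ^ 2 - 128 - 432 * Θ ^ 4) * X - 256 * ς ^ 3 = 0
    simp only [X, hrpow]
    have hD' : (2 * (1 - Θ ^ 2)) ≠ 0 := ne_of_gt hD
    have hD'' : (1 - Θ ^ 2) ≠ 0 := by linarith
    field_simp
    linear_combination (16 * ς^3 * Θ^2 * (Θ^2-1)) * hs6
end

section
/- Let ς > 0. For each integer M ≥ 10, set Θ_M = cos(π/M) and define d(M) = ( −(1/2)·csc²(π/M)·( ς·Θ_M·(9Θ_M² − 8)^{3/2} + ς·(27Θ_M⁴ − 36Θ_M² + 8) ) )^{1/4}. Then d(M) → 2·ς^{1/4} as M → ∞. -/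
open Filter Real

/-- Corollary 1 (optimal distance): the large-`M` optimal PB distance
`d(M) = (-(1/2) csc²(π/M)(ςΘ_M(9Θ_M²-8)^{3/2} + ς(27Θ_M⁴-36Θ_M²+8)))^{1/4}`
converges to `2 ς^{1/4}` as `M → ∞`. -/
theorem stmt11 (ς : ℝ) (hς : 0 < ς) :
    Filter.Tendsto
      (fun M : ℕ =>
        (-(1 / 2) * (1 / Real.sin (Real.pi / (M : ℝ)) ^ 2) *
          (ς * Real.cos (Real.pi / (M : ℝ)) *
              (9 * Real.cos (Real.pi / (M : ℝ)) ^ 2 - 8) ^ ((3 : ℝ) / 2) +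
            ς * (27 * Real.cos (Real.pi / (M : ℝ)) ^ 4 -
              36 * Real.cos (Real.pi / (M : ℝ)) ^ 2 + 8))) ^ ((1 : ℝ) / 4))
      Filter.atTop (nhds (2 * ς ^ ((1 : ℝ) / 4))) := by
  set c : ℕ → ℝ := fun M => Real.cos (Real.pi / (M : ℝ)) with hcdef
  have hc : Tendsto c atTop (nhds 1) := by
    have h1 : Tendsto (fun M : ℕ => Real.pi / (M : ℝ)) atTop (nhds 0) :=
      tendsto_const_div_atTop_nhds_zero_nat Real.pi
    have := (Real.continuous_cos.continuousAt (x := 0)).tendsto.comp h1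
    simp only [Real.cos_zero] at this; exact this
  set A : ℕ → ℝ := fun M => c M * (9 * c M ^ 2 - 8) ^ ((3:ℝ)/2) with hAdef
  set B : ℕ → ℝ := fun M => 27 * c M ^ 4 - 36 * c M ^ 2 + 8 with hBdef
  have hBA : Tendsto (fun M => B M - A M) atTop (nhds (-2)) := by
    have hcont : ContinuousAt (fun t : ℝ => (27 * t ^ 4 - 36 * t ^ 2 + 8) -
        t * (9 * t ^ 2 - 8) ^ ((3:ℝ)/2)) 1 := by
      have h1 : ContinuousAt (fun t : ℝ => (9 * t ^ 2 - 8) ^ ((3:ℝ)/2)) 1 := by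
        apply ContinuousAt.comp (g := fun x : ℝ => x ^ ((3:ℝ)/2))
        · exact Real.continuousAt_rpow_const _ _ (Or.inl (by norm_num))
        · fun_prop
      fun_prop
    have h := hcont.tendsto.comp hc
    have h2 : Tendsto (fun M => B M - A M) atTop
        (nhds ((27 * (1:ℝ) ^ 4 - 36 * 1 ^ 2 + 8) - 1 * (9 * 1 ^ 2 - 8) ^ ((3:ℝ)/2))) := h
    have hval : ((27 * (1:ℝ) ^ 4 - 36 * 1 ^ 2 + 8) - 1 * (9 * 1 ^ 2 - 8) ^ ((3:ℝ)/2)) = -2 := by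
      rw [show (9:ℝ) * 1 ^ 2 - 8 = 1 by norm_num, Real.one_rpow]
      norm_num
    rw [hval] at h2
    exact h2
  -- eventually facts
  have hu : ∀ᶠ M in atTop, 0 < 9 * c M ^ 2 - 8 := by
    have h : Tendsto (fun M => 9 * c M ^ 2 - 8) atTop (nhds (9 * 1 ^ 2 - 8)) :=
      ((hc.pow 2).const_mul 9).sub_const 8
    rw [show (9:ℝ) * 1 ^ 2 - 8 = 1 by norm_num] at h
    exact h.eventually (eventually_gt_nhds (by norm_num))
  have hBAne : ∀ᶠ M in atTop, B M - A M < 0 :=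
    hBA.eventually (eventually_lt_nhds (by norm_num))
  have hsin : ∀ᶠ (M : ℕ) in atTop, 0 < Real.sin (Real.pi / (M : ℝ)) := by
    filter_upwards [eventually_ge_atTop 2] with M hM
    apply Real.sin_pos_of_pos_of_lt_pi
    · positivity
    · have : (2:ℝ) ≤ (M:ℝ) := by exact_mod_cast hM
      calc Real.pi / (M:ℝ) ≤ Real.pi / 2 := by
            apply div_le_div_of_nonneg_left Real.pi_pos.le (by norm_num) this
        _ < Real.pi := by linarith [Real.pi_pos]
  -- inner tendsto
  have hinner : Tendsto
      (fun M : ℕ =>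
        -(1 / 2) * (1 / Real.sin (Real.pi / (M : ℝ)) ^ 2) * (ς * A M + ς * B M))
      atTop (nhds (16 * ς)) := by
    have heq : ∀ᶠ (M : ℕ) in atTop,
        -(1 / 2) * (1 / Real.sin (Real.pi / (M : ℝ)) ^ 2) * (ς * A M + ς * B M)
          = -32 * ς / (B M - A M) := by
      filter_upwards [hu, hBAne, hsin] with M huM hBAM hsinM
      have hs2 : Real.sin (Real.pi / (M : ℝ)) ^ 2 = 1 - c M ^ 2 := by
        have := Real.sin_sq_add_cos_sq (Real.pi / (M : ℝ))
        simp only [hcdef]; linarith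
      have hrp : ((9 * c M ^ 2 - 8) ^ ((3:ℝ)/2)) ^ 2 = (9 * c M ^ 2 - 8) ^ 3 := by
        rw [← Real.rpow_natCast ((9 * c M ^ 2 - 8) ^ ((3:ℝ)/2)) 2,
          ← Real.rpow_mul huM.le]
        norm_num
      have key : (B M - A M) * (B M + A M) = 64 * (1 - c M ^ 2) := by
        have : (B M - A M) * (B M + A M)
            = B M ^ 2 - c M ^ 2 * (((9 * c M ^ 2 - 8) ^ ((3:ℝ)/2)) ^ 2) := by
          simp only [hAdef]; ring
        rw [this, hrp]
        simp only [hBdef]; ring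
      have hsne : (1 : ℝ) - c M ^ 2 ≠ 0 := by
        rw [← hs2]; positivity
      have hBAne' : B M - A M ≠ 0 := ne_of_lt hBAM
      rw [hs2]
      field_simp
      linear_combination (-ς/2) * key + (ς * c M ^ 2 / 2 + (1 - ς) * c M ^ 2) * hrp
    have : Tendsto (fun M => -32 * ς / (B M - A M)) atTop (nhds (-32 * ς / (-2))) :=
      Tendsto.div tendsto_const_nhds hBA (by norm_num)
    rw [show (-32 : ℝ) * ς / (-2) = 16 * ς by ring] at this
    exact Tendsto.congr' (Filter.EventuallyEq.symm heq) this
  -- final step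
  have h16 : (0:ℝ) < 16 * ς := by positivity
  have hcontr : ContinuousAt (fun x : ℝ => x ^ ((1:ℝ)/4)) (16 * ς) :=
    Real.continuousAt_rpow_const _ _ (Or.inl h16.ne')
  have hcomp := hcontr.tendsto.comp hinner
  have hfin : Tendsto
      (fun M : ℕ =>
        (-(1 / 2) * (1 / Real.sin (Real.pi / (M : ℝ)) ^ 2) *
          (ς * Real.cos (Real.pi / (M : ℝ)) *
              (9 * Real.cos (Real.pi / (M : ℝ)) ^ 2 - 8) ^ ((3 : ℝ) / 2) +
            ς * (27 * Real.cos (Real.pi / (M : ℝ)) ^ 4 -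
              36 * Real.cos (Real.pi / (M : ℝ)) ^ 2 + 8))) ^ ((1 : ℝ) / 4))
      atTop (nhds ((16 * ς) ^ ((1:ℝ)/4))) := by
    refine hcomp.congr fun M => ?_
    simp only [Function.comp_apply, hAdef, hBdef, hcdef]
    ring_nf
  have hval : (16 * ς) ^ ((1:ℝ)/4) = 2 * ς ^ ((1:ℝ)/4) := by
    rw [Real.mul_rpow (by norm_num) hς.le]
    congr 1
    rw [show (16:ℝ) = 2 ^ (4:ℕ) by norm_num, ← Real.rpow_natCast 2 4,
      ← Real.rpow_mul (by norm_num)]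
    norm_num
  rw [← hval]
  exact hfin
end
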